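/- Let E(z,s) = Σ_{γ ∈ Γ_∞\PSL₂(ℤ)} Im(γz)^s be the real-analytic Eisenstein series for PSL₂(ℤ) (convergent for Re(s) > 1, meromorphically continued), and for a prime p define E(z,s)_{Γ₀(p)} as the corresponding Eisenstein series for the cusp at infinity of Γ₀(p). Then for Re(s) > 1, E(z,s)_{Γ₀(p)} = (1 - p^{-2s})^{-1} (p^{-s} E(pz, s) - p^{-2s} E(z,s)). -/

import Mathlib

open Real Complex

/-- One term `(Im z / |cz+d|²)^s` of the real-analytic Eisenstein series. -/
noncomputable def eisTerm (z : ℂ) (s : ℂ) (cd : ℤ × ℤ) : ℂ :=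
  ((z.im / Complex.normSq ((cd.1 : ℂ) * z + (cd.2 : ℂ)) : ℝ) : ℂ) ^ s

/-- The real-analytic Eisenstein series `E(z,s) = Σ_{γ ∈ Γ_∞\PSL₂(ℤ)} Im(γz)^s` for `PSL₂(ℤ)`:
cosets in `Γ_∞\PSL₂(ℤ)` correspond to coprime bottom rows `±(c,d)`, whence the factor `1/2`
when summing over all coprime pairs. -/
noncomputable def eisFull (z : ℂ) (s : ℂ) : ℂ :=
  (1 / 2) * ∑' cd : {cd : ℤ × ℤ // IsCoprime cd.1 cd.2}, eisTerm z s cd.1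

/-- The Eisenstein series at the cusp `∞` for `Γ₀(p)`: bottom rows of `Γ₀(p)` are the
coprime pairs `(c,d)` with `p ∣ c`. -/
noncomputable def eisGamma0 (p : ℕ) (z : ℂ) (s : ℂ) : ℂ :=
  (1 / 2) * ∑' cd : {cd : ℤ × ℤ // IsCoprime cd.1 cd.2 ∧ (p : ℤ) ∣ cd.1}, eisTerm z s cd.1


/-!
Split the coprime pairs `(c, d)` by whether `p ∣ c`, so that `2 E(z,s) = G + C` where
`G = 2 E(z,s)_{Γ₀(p)}`. The `(c, d)`-term of `E(pz,s)` is `p^s` times the `(pc, d)`-term of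
`E(z,s)`. For `p ∤ d` the pairs `(pc, d)` are exactly the coprime pairs with `p ∣ c`, which
gives `G`; for `d = pd'` we have `(pc, d) = p (c, d')` with `(c, d')` coprime and `p ∤ c`, and the
homogeneity of the terms in `(c, d)` gives `p^{-2s} C`. Hence `2 p^{-s} E(pz,s) = G + p^{-2s} C`,
and eliminating `C` yields the formula.
-/

section CoprimePairs

open Set Function

variable {R : Type*} [CommRing R] [IsDomain R] [IsBezout R] {p : R}

theorem IsCoprime.mul_left_iff_of_prime {a b : R} (hp : Prime p) :
    IsCoprime (p * a) b ↔ IsCoprime a b ∧ ¬ p ∣ b := by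
  rw [IsCoprime.mul_left_iff, hp.coprime_iff_not_dvd, and_comm]

theorem image_map_mul_id_setOf_isCoprime (hp : Prime p) :
    Prod.map (p * ·) id '' {cd : R × R | IsCoprime cd.1 cd.2 ∧ ¬ p ∣ cd.2}
      = {cd | IsCoprime cd.1 cd.2 ∧ p ∣ cd.1} := by
  ext ⟨a, b⟩
  simp only [mem_image, mem_ofPred, Prod.map_apply, id, Prod.mk.injEq, Prod.exists]
  constructor
  · rintro ⟨c, d, hcd, rfl, rfl⟩
    exact ⟨(IsCoprime.mul_left_iff_of_prime hp).mpr hcd, dvd_mul_right p c⟩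
  · rintro ⟨hab, c, rfl⟩
    exact ⟨c, b, (IsCoprime.mul_left_iff_of_prime hp).mp hab, rfl, rfl⟩

theorem image_map_id_mul_setOf_isCoprime (hp : Prime p) :
    Prod.map id (p * ·) '' {cd : R × R | IsCoprime cd.1 cd.2 ∧ ¬ p ∣ cd.1}
      = {cd | IsCoprime cd.1 cd.2 ∧ p ∣ cd.2} := by
  ext ⟨a, b⟩
  simp only [mem_image, mem_ofPred, Prod.map_apply, id, Prod.mk.injEq, Prod.exists]
  constructor
  · rintro ⟨c, d, hcd, rfl, rfl⟩
    exact ⟨((IsCoprime.mul_left_iff_of_prime hp).mpr ⟨hcd.1.symm, hcd.2⟩).symm,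
      dvd_mul_right p d⟩
  · rintro ⟨hab, d, rfl⟩
    obtain ⟨hda, hpa⟩ := (IsCoprime.mul_left_iff_of_prime hp).mp hab.symm
    exact ⟨a, d, ⟨hda.symm, hpa⟩, rfl, rfl⟩

theorem tsum_isCoprime_not_dvd_snd_mul_fst {E : Type*} [AddCommMonoid E] [TopologicalSpace E]
    (f : R × R → E) (hp : Prime p) :
    ∑' cd : {cd : R × R // IsCoprime cd.1 cd.2 ∧ ¬ p ∣ cd.2}, f (p * cd.1.1, cd.1.2)
      = ∑' cd : {cd : R × R // IsCoprime cd.1 cd.2 ∧ p ∣ cd.1}, f cd :=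
  calc _ = ∑' cd : ↥(Prod.map (p * ·) id '' {cd : R × R | IsCoprime cd.1 cd.2 ∧ ¬ p ∣ cd.2}),
        f cd :=
        (tsum_image f ((mul_right_injective₀ hp.ne_zero).prodMap injective_id).injOn).symm
    _ = _ := by rw [image_map_mul_id_setOf_isCoprime hp]; rfl

theorem tsum_isCoprime_dvd_snd_mul_fst {E : Type*} [AddCommMonoid E] [TopologicalSpace E]
    (f : R × R → E) (hp : Prime p) :
    ∑' cd : {cd : R × R // IsCoprime cd.1 cd.2 ∧ p ∣ cd.2}, f (p * cd.1.1, cd.1.2)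
      = ∑' cd : {cd : R × R // IsCoprime cd.1 cd.2 ∧ ¬ p ∣ cd.1}, f (p * cd.1.1, p * cd.1.2) :=
  calc _ = ∑' cd : ↥(Prod.map id (p * ·) '' {cd : R × R | IsCoprime cd.1 cd.2 ∧ ¬ p ∣ cd.1}),
        f (p * cd.1.1, cd.1.2) := by
        rw [image_map_id_mul_setOf_isCoprime hp]; rfl
    _ = _ := tsum_image (fun cd => f (p * cd.1, cd.2))
        (injective_id.prodMap (mul_right_injective₀ hp.ne_zero)).injOn

end CoprimePairs

theorem natCast_cpow_ne_one {n : ℕ} (hn : 1 < n) {w : ℂ} (hw : w.re ≠ 0) : (n : ℂ) ^ w ≠ 1 := by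
  intro h
  have hnorm := congrArg norm h
  rw [norm_natCast_cpow_of_pos (by omega), norm_one, ← Real.rpow_zero (n : ℝ),
    Real.rpow_right_inj (by positivity) (by exact_mod_cast hn.ne')] at hnorm
  exact hw hnorm

theorem Summable.tsum_subtype_eq_add_and_not {α E : Type*} [NormedAddCommGroup E]
    [CompleteSpace E] {f : α → E} (hf : Summable f) (P Q : α → Prop) :
    ∑' x : {x // P x}, f x = ∑' x : {x // P x ∧ Q x}, f x + ∑' x : {x // P x ∧ ¬ Q x}, f x := by
  have hunion : {x | P x} = {x | P x ∧ Q x} ∪ {x | P x ∧ ¬ Q x} := by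
    ext x
    by_cases Q x <;> simp_all
  have hdisj : Disjoint {x | P x ∧ Q x} {x | P x ∧ ¬ Q x} :=
    Set.disjoint_left.mpr fun _ h h' => h'.2 h.2
  exact (congrArg (fun S : Set α => ∑' x : S, f x) hunion).trans
    ((hf.subtype _).tsum_union_disjoint hdisj (hf.subtype _))

theorem norm_eisTerm {z : ℂ} (hz : 0 ≤ z.im) {s : ℂ} (hs : s.re ≠ 0) (cd : ℤ × ℤ) :
    ‖eisTerm z s cd‖ = z.im ^ s.re * ‖(cd.1 : ℂ) * z + cd.2‖ ^ (-(2 * s.re)) := by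
  rw [eisTerm, norm_cpow_eq_rpow_re_of_nonneg (div_nonneg hz (normSq_nonneg _)) hs,
    Real.div_rpow hz (normSq_nonneg _), normSq_eq_norm_sq, ← Real.rpow_natCast,
    ← Real.rpow_mul (norm_nonneg _), Real.rpow_neg (norm_nonneg _), div_eq_mul_inv]
  norm_num

theorem summable_eisTerm {z : ℂ} (hz : 0 < z.im) {s : ℂ} (hs : 1 < s.re) :
    Summable (eisTerm z s) := by
  have hmaj := ((EisensteinSeries.summable_one_div_norm_rpow (k := 2 * s.re)
      (by linarith)).comp_injective (finTwoArrowEquiv ℤ).symm.injective).mul_left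
      (z.im ^ s.re * EisensteinSeries.r ⟨z, hz⟩ ^ (-(2 * s.re)))
  refine Summable.of_norm_bounded hmaj fun cd => ?_
  rw [norm_eisTerm hz.le (by linarith) cd, mul_assoc]
  gcongr
  simpa using EisensteinSeries.summand_bound ⟨z, hz⟩ (k := 2 * s.re) (by linarith) ![cd.1, cd.2]

theorem eisTerm_natCast_mul (n : ℕ) {z : ℂ} (hz : 0 ≤ z.im) (s : ℂ) (c d : ℤ) :
    eisTerm (n * z) s (c, d) = (n : ℂ) ^ s * eisTerm z s (n * c, d) := by
  have him : (n * z).im = n * z.im := by simp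
  have harg : (c : ℂ) * (n * z) + d = ((n * c : ℤ) : ℂ) * z + d := by push_cast; ring
  rw [eisTerm, eisTerm]
  dsimp only
  rw [him, harg, mul_div_assoc, ofReal_mul, mul_cpow_ofReal_nonneg (by positivity)
    (div_nonneg hz (normSq_nonneg _)), ofReal_natCast]

theorem eisTerm_mul_mul {n : ℕ} (hn : n ≠ 0) {z : ℂ} (hz : 0 ≤ z.im) (s : ℂ) (c d : ℤ) :
    eisTerm z s (n * c, n * d) = (n : ℂ) ^ (-2 * s) * eisTerm z s (c, d) := by
  have hbase : z.im / normSq (c * z + d)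
      = (n : ℝ) ^ 2 * (z.im / normSq ((n * c : ℤ) * z + (n * d : ℤ))) := by
    rw [show ((n * c : ℤ) * z + (n * d : ℤ) : ℂ) = n * (c * z + d) by push_cast; ring,
      normSq_mul, normSq_natCast]
    field_simp
  have hscale : eisTerm z s (c, d) = (n : ℂ) ^ (2 * s) * eisTerm z s (n * c, n * d) := by
    rw [eisTerm, eisTerm]
    dsimp only
    rw [hbase, ofReal_mul, mul_cpow_ofReal_nonneg (by positivity)
      (div_nonneg hz (normSq_nonneg _)), ofReal_pow, ofReal_natCast,
      ← Nat.cast_ofNat (R := ℂ), natCast_cpow_natCast_mul]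
  rw [hscale, ← mul_assoc, ← cpow_add _ _ (by exact_mod_cast hn), neg_mul, neg_add_cancel,
    cpow_zero, one_mul]

theorem tsum_isCoprime_eisTerm_natCast_mul {p : ℕ} (hp : p.Prime) {z : ℂ} (hz : 0 < z.im)
    {s : ℂ} (hs : 1 < s.re) :
    ∑' cd : {cd : ℤ × ℤ // IsCoprime cd.1 cd.2}, eisTerm (p * z) s cd
      = (p : ℂ) ^ s * (∑' cd : {cd : ℤ × ℤ // IsCoprime cd.1 cd.2 ∧ (p : ℤ) ∣ cd.1}, eisTerm z s cd
        + (p : ℂ) ^ (-2 * s) *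
          ∑' cd : {cd : ℤ × ℤ // IsCoprime cd.1 cd.2 ∧ ¬ (p : ℤ) ∣ cd.1}, eisTerm z s cd) := by
  have hpZ : Prime (p : ℤ) := Nat.prime_iff_prime_int.mp hp
  have hsum : Summable fun cd : ℤ × ℤ => eisTerm z s (p * cd.1, cd.2) :=
    (summable_eisTerm hz hs).comp_injective
      ((mul_right_injective₀ hpZ.ne_zero).prodMap Function.injective_id)
  calc _ = (p : ℂ) ^ s * ∑' cd : {cd : ℤ × ℤ // IsCoprime cd.1 cd.2},
              eisTerm z s (p * cd.1.1, cd.1.2) := by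
        rw [← tsum_mul_left]
        exact tsum_congr fun cd => eisTerm_natCast_mul p hz.le s cd.1.1 cd.1.2
    _ = _ := by
      rw [hsum.tsum_subtype_eq_add_and_not _ (fun cd => (p : ℤ) ∣ cd.2), add_comm,
        tsum_isCoprime_not_dvd_snd_mul_fst _ hpZ, tsum_isCoprime_dvd_snd_mul_fst _ hpZ,
        ← tsum_mul_left]
      congr 2
      exact tsum_congr fun cd => eisTerm_mul_mul hp.ne_zero hz.le s cd.1.1 cd.1.2

/-- For a prime `p`, `z` in the upper half plane and `Re s > 1`:
`E(z,s)_{Γ₀(p)} = (1 - p^{-2s})⁻¹ (p^{-s} E(pz,s) - p^{-2s} E(z,s))`. -/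
theorem eisGamma0_eq (p : ℕ) (hp : p.Prime) (z : ℂ) (hz : 0 < z.im) (s : ℂ) (hs : 1 < s.re) :
    eisGamma0 p z s
      = (1 - (p : ℂ) ^ (-2 * s))⁻¹
        * ((p : ℂ) ^ (-s) * eisFull ((p : ℂ) * z) s - (p : ℂ) ^ (-2 * s) * eisFull z s) := by
  set G := ∑' cd : {cd : ℤ × ℤ // IsCoprime cd.1 cd.2 ∧ (p : ℤ) ∣ cd.1}, eisTerm z s cd
  set C := ∑' cd : {cd : ℤ × ℤ // IsCoprime cd.1 cd.2 ∧ ¬ (p : ℤ) ∣ cd.1}, eisTerm z s cd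
  have hfull : eisFull z s = 1 / 2 * (G + C) := by
    rw [eisFull, (summable_eisTerm hz hs).tsum_subtype_eq_add_and_not _ (fun cd => (p : ℤ) ∣ cd.1)]
  have hfull_mul : eisFull (p * z) s = 1 / 2 * ((p : ℂ) ^ s * (G + (p : ℂ) ^ (-2 * s) * C)) := by
    rw [eisFull, tsum_isCoprime_eisTerm_natCast_mul hp hz hs]
  have hne : 1 - (p : ℂ) ^ (-2 * s) ≠ 0 := by
    have hre : (-2 * s).re ≠ 0 := by
      rw [show (-2 * s).re = -2 * s.re by simp]
      linarith
    exact sub_ne_zero.mpr (natCast_cpow_ne_one hp.one_lt hre).symm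
  have hps : (p : ℂ) ^ (-s) * (p : ℂ) ^ s = 1 := by
    rw [← cpow_add _ _ (by exact_mod_cast hp.ne_zero), neg_add_cancel, cpow_zero]
  rw [eisGamma0, hfull, hfull_mul, eq_comm, inv_mul_eq_iff_eq_mul₀ hne]
  linear_combination (1 / 2 * (G + (p : ℂ) ^ (-2 * s) * C)) * hps
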